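/- The function g_e([z,t]) = a₀(|z|⁴+t²)^{-n/2}, with a₀ = 2^{n-2} Γ(n/2)² / π^{n+1}, satisfies L₀ g_e = 0 on Hₙ \ {e}, where L₀ = -¼ Σⱼ(Xⱼ² + Yⱼ²). -/

import Mathlib

abbrev HR (n : ℕ) := (Fin n → ℝ) × (Fin n → ℝ) × ℝ

noncomputable def eX {n : ℕ} (j : Fin n) : HR n := (Pi.single j 1, 0, 0)
noncomputable def eY {n : ℕ} (j : Fin n) : HR n := (0, Pi.single j 1, 0)
noncomputable def eT {n : ℕ} : HR n := (0, 0, 1)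

noncomputable def X {n : ℕ} (j : Fin n) (f : HR n → ℝ) (p : HR n) : ℝ :=
  fderiv ℝ f p (eX j) + 2 * p.2.1 j * fderiv ℝ f p eT

noncomputable def Y {n : ℕ} (j : Fin n) (f : HR n → ℝ) (p : HR n) : ℝ :=
  fderiv ℝ f p (eY j) - 2 * p.1 j * fderiv ℝ f p eT

/-- The sub-Laplacian L₀ = -¼ Σⱼ (Xⱼ² + Yⱼ²). -/
noncomputable def L0 {n : ℕ} (f : HR n → ℝ) (p : HR n) : ℝ :=
  -(1 / 4) * ∑ j, (X j (X j f) p + Y j (Y j f) p)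

/-- |z|² in real coordinates. -/
noncomputable def qz {n : ℕ} (p : HR n) : ℝ := ∑ j, (p.1 j ^ 2 + p.2.1 j ^ 2)

/-- The normalization constant a₀ = 2^{n-2} Γ(n/2)² / π^{n+1}. -/
noncomputable def a0 (n : ℕ) : ℝ :=
  (2 : ℝ) ^ ((n : ℝ) - 2) * (Real.Gamma ((n : ℝ) / 2)) ^ 2 / Real.pi ^ (n + 1)

/-- The fundamental solution g_e([z,t]) = a₀(|z|⁴+t²)^{-n/2}. -/
noncomputable def ge {n : ℕ} (p : HR n) : ℝ :=
  a0 n * (qz p ^ 2 + p.2.2 ^ 2) ^ (-(n : ℝ) / 2)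

/-! Each `Xⱼ`, `Yⱼ` is differentiation along a vector field, so with `w = |z|⁴ + t²` the chain rule
gives `Σⱼ (Xⱼ² + Yⱼ²) w^s = s(s-1) w^(s-2) Σⱼ ((Xⱼw)² + (Yⱼw)²) + s w^(s-1) Σⱼ (Xⱼ²w + Yⱼ²w)`.
A direct computation gives `Σⱼ ((Xⱼw)² + (Yⱼw)²) = 16 w |z|²` and `Σⱼ (Xⱼ²w + Yⱼ²w) = 8(n+2) |z|²`,
hence `L₀ w^s = -2s(2s+n) w^(s-1) |z|²`, which vanishes for `s = -n/2`. -/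

open Filter Topology

section DerivAlong

variable {E : Type*} [NormedAddCommGroup E] [NormedSpace ℝ E] (V : E → E) {f g : E → ℝ} {p : E}

noncomputable def derivAlong (f : E → ℝ) (p : E) : ℝ := fderiv ℝ f p (V p)

theorem HasFDerivAt.derivAlong_eq {f' : E →L[ℝ] ℝ} (h : HasFDerivAt f f' p) :
    derivAlong V f p = f' (V p) := by
  rw [derivAlong, h.fderiv]

theorem derivAlong_congr (h : f =ᶠ[𝓝 p] g) : derivAlong V f p = derivAlong V g p := by
  rw [derivAlong, derivAlong, h.fderiv_eq]

theorem derivAlong_const_mul (c : ℝ) :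
    derivAlong V (fun q => c * f q) = fun q => c * derivAlong V f q := by
  funext q
  exact congrArg (fun L : E →L[ℝ] ℝ => L (V q)) (congrFun (fderiv_const_smul_field (f := f) c) q)

theorem derivAlong_add (hf : DifferentiableAt ℝ f p) (hg : DifferentiableAt ℝ g p) :
    derivAlong V (fun q => f q + g q) p = derivAlong V f p + derivAlong V g p := by
  simp only [derivAlong, fderiv_fun_add hf hg, add_apply]

theorem derivAlong_sub (hf : DifferentiableAt ℝ f p) (hg : DifferentiableAt ℝ g p) :
    derivAlong V (fun q => f q - g q) p = derivAlong V f p - derivAlong V g p := by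
  simp only [derivAlong, fderiv_fun_sub hf hg, sub_apply]

theorem derivAlong_mul (hf : DifferentiableAt ℝ f p) (hg : DifferentiableAt ℝ g p) :
    derivAlong V (fun q => f q * g q) p = f p * derivAlong V g p + g p * derivAlong V f p := by
  simp only [derivAlong, fderiv_fun_mul hf hg, add_apply, smul_apply, smul_eq_mul]

theorem derivAlong_pow (hf : DifferentiableAt ℝ f p) (m : ℕ) :
    derivAlong V (fun q => f q ^ m) p = m * f p ^ (m - 1) * derivAlong V f p := by
  simp [derivAlong, fderiv_fun_pow m hf, mul_assoc]

theorem derivAlong_rpow_const (hf : DifferentiableAt ℝ f p) (hp : f p ≠ 0) (s : ℝ) :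
    derivAlong V (fun q => f q ^ s) p = s * f p ^ (s - 1) * derivAlong V f p := by
  rw [(hf.hasFDerivAt.rpow_const (Or.inl hp)).derivAlong_eq]
  simp [derivAlong, mul_assoc]

theorem derivAlong_derivAlong_rpow_const (hf : ∀ᶠ q in 𝓝 p, DifferentiableAt ℝ f q)
    (hDf : DifferentiableAt ℝ (derivAlong V f) p) (hp : f p ≠ 0) (s : ℝ) :
    derivAlong V (derivAlong V (fun q => f q ^ s)) p =
      s * ((s - 1) * f p ^ (s - 2) * derivAlong V f p ^ 2
        + f p ^ (s - 1) * derivAlong V (derivAlong V f) p) := by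
  have hfp : DifferentiableAt ℝ f p := hf.self_of_nhds
  have hne : ∀ᶠ q in 𝓝 p, f q ≠ 0 := hfp.continuousAt.eventually_ne hp
  have hfirst : derivAlong V (fun q => f q ^ s) =ᶠ[𝓝 p]
      fun q => s * f q ^ (s - 1) * derivAlong V f q := by
    filter_upwards [hf, hne] with q hfq hq using derivAlong_rpow_const V hfq hq s
  have hpow : DifferentiableAt ℝ (fun q => s * f q ^ (s - 1)) p :=
    (hfp.rpow_const (Or.inl hp)).const_mul s
  rw [derivAlong_congr V hfirst, derivAlong_mul V hpow hDf, derivAlong_const_mul]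
  beta_reduce
  rw [derivAlong_rpow_const V hfp hp, show s - 1 - 1 = s - 2 by ring]
  ring

end DerivAlong

section Coordinates

variable {ι : Type*} [Fintype ι] {F G : Type*} [NormedAddCommGroup F] [NormedSpace ℝ F]
  [NormedAddCommGroup G] [NormedSpace ℝ G]

theorem hasFDerivAt_fst_apply (p : (ι → ℝ) × F) (i : ι) :
    HasFDerivAt (fun q : (ι → ℝ) × F => q.1 i)
      ((ContinuousLinearMap.proj i).comp (ContinuousLinearMap.fst ℝ _ _)) p :=
  hasFDerivAt_pi'.1 hasFDerivAt_fst i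

theorem hasFDerivAt_snd_fst_apply (p : G × (ι → ℝ) × F) (i : ι) :
    HasFDerivAt (fun q : G × (ι → ℝ) × F => q.2.1 i)
      ((ContinuousLinearMap.proj i).comp
        ((ContinuousLinearMap.fst ℝ _ _).comp (ContinuousLinearMap.snd ℝ _ _))) p :=
  hasFDerivAt_pi'.1 (hasFDerivAt_snd (p := p)).fst i

end Coordinates

section Heisenberg

variable {n : ℕ}

noncomputable def fieldX (j : Fin n) (p : HR n) : HR n := (Pi.single j 1, 0, 2 * p.2.1 j)

noncomputable def fieldY (j : Fin n) (p : HR n) : HR n := (0, Pi.single j 1, -(2 * p.1 j))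

theorem X_eq_derivAlong (j : Fin n) : X j = derivAlong (fieldX j) := by
  funext f p
  rw [X, derivAlong, ← smul_eq_mul, ← map_smul, ← map_add]
  congr 1
  simp [fieldX, eX, eT]

theorem Y_eq_derivAlong (j : Fin n) : Y j = derivAlong (fieldY j) := by
  funext f p
  rw [Y, derivAlong, ← smul_eq_mul, ← map_smul, ← map_sub]
  congr 1
  simp [fieldY, eY, eT]

theorem derivAlong_fst_apply (V : HR n → HR n) (p : HR n) (i : Fin n) :
    derivAlong V (fun q : HR n => q.1 i) p = (V p).1 i :=
  (hasFDerivAt_fst_apply p i).derivAlong_eq V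

theorem derivAlong_snd_fst_apply (V : HR n → HR n) (p : HR n) (i : Fin n) :
    derivAlong V (fun q : HR n => q.2.1 i) p = (V p).2.1 i :=
  (hasFDerivAt_snd_fst_apply p i).derivAlong_eq V

theorem derivAlong_snd_snd (V : HR n → HR n) (p : HR n) :
    derivAlong V (fun q : HR n => q.2.2) p = (V p).2.2 :=
  (hasFDerivAt_snd (p := p)).snd.derivAlong_eq V

theorem derivAlong_qz (V : HR n → HR n) (p : HR n) :
    derivAlong V qz p = 2 * ∑ i, (p.1 i * (V p).1 i + p.2.1 i * (V p).2.1 i) := by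
  have hqz : HasFDerivAt qz _ p := HasFDerivAt.fun_sum fun i _ =>
    ((hasFDerivAt_fst_apply p i).pow 2).fun_add ((hasFDerivAt_snd_fst_apply p i).pow 2)
  rw [hqz.derivAlong_eq]
  simp [Finset.mul_sum, mul_add, mul_assoc]

@[fun_prop]
theorem differentiable_qz : Differentiable ℝ (qz (n := n)) := by
  unfold qz
  fun_prop

noncomputable def gauge4 (p : HR n) : ℝ := qz p ^ 2 + p.2.2 ^ 2

@[fun_prop]
theorem differentiable_gauge4 : Differentiable ℝ (gauge4 (n := n)) := by
  unfold gauge4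
  fun_prop

theorem derivAlong_gauge4 (V : HR n → HR n) (p : HR n) :
    derivAlong V gauge4 p = 2 * qz p * derivAlong V qz p + 2 * p.2.2 * (V p).2.2 := by
  unfold gauge4
  rw [derivAlong_add V (by fun_prop) (by fun_prop), derivAlong_pow V (by fun_prop),
    derivAlong_pow V (by fun_prop), derivAlong_snd_snd]
  push_cast
  ring

theorem derivAlong_fieldX_gauge4 (j : Fin n) :
    derivAlong (fieldX j) gauge4 = fun p => 4 * (qz p * p.1 j + p.2.2 * p.2.1 j) := by
  funext p
  simp only [derivAlong_gauge4, derivAlong_qz, fieldX, Pi.single_apply, mul_ite, mul_one, mul_zero,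
    Pi.zero_apply, add_zero, Finset.sum_ite_eq', Finset.mem_univ, ↓reduceIte]
  ring

theorem derivAlong_fieldY_gauge4 (j : Fin n) :
    derivAlong (fieldY j) gauge4 = fun p => 4 * (qz p * p.2.1 j - p.2.2 * p.1 j) := by
  funext p
  simp only [derivAlong_gauge4, derivAlong_qz, fieldY, Pi.zero_apply, mul_zero, Pi.single_apply,
    mul_ite, mul_one, zero_add, Finset.sum_ite_eq', Finset.mem_univ, ↓reduceIte, mul_neg]
  ring

theorem derivAlong_fieldX_derivAlong_fieldX_gauge4 (j : Fin n) (p : HR n) :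
    derivAlong (fieldX j) (derivAlong (fieldX j) gauge4) p
      = 4 * (qz p + 2 * p.1 j ^ 2 + 2 * p.2.1 j ^ 2) := by
  rw [derivAlong_fieldX_gauge4, derivAlong_const_mul]
  simp (disch := fun_prop) only [derivAlong_add, derivAlong_mul, derivAlong_fst_apply, fieldX,
    Pi.single_eq_same, mul_one, derivAlong_qz, Pi.single_apply, mul_ite, mul_zero, Pi.zero_apply,
    add_zero, Finset.sum_ite_eq', Finset.mem_univ, ↓reduceIte, derivAlong_snd_fst_apply,
    derivAlong_snd_snd, zero_add]
  ring

theorem derivAlong_fieldY_derivAlong_fieldY_gauge4 (j : Fin n) (p : HR n) :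
    derivAlong (fieldY j) (derivAlong (fieldY j) gauge4) p
      = 4 * (qz p + 2 * p.1 j ^ 2 + 2 * p.2.1 j ^ 2) := by
  rw [derivAlong_fieldY_gauge4, derivAlong_const_mul]
  simp (disch := fun_prop) only [derivAlong_sub, derivAlong_mul, derivAlong_snd_fst_apply, fieldY,
    Pi.single_eq_same, mul_one, derivAlong_qz, Pi.zero_apply, mul_zero, Pi.single_apply, mul_ite,
    zero_add, Finset.sum_ite_eq', Finset.mem_univ, ↓reduceIte, derivAlong_fst_apply,
    derivAlong_snd_snd, mul_neg]
  ring

theorem sum_derivAlong_gauge4_sq (p : HR n) :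
    ∑ j, (derivAlong (fieldX j) gauge4 p ^ 2 + derivAlong (fieldY j) gauge4 p ^ 2)
      = 16 * gauge4 p * qz p := by
  simp only [derivAlong_fieldX_gauge4, derivAlong_fieldY_gauge4, gauge4, qz, Finset.mul_sum]
  exact Finset.sum_congr rfl fun j _ => by ring

theorem sum_derivAlong_derivAlong_gauge4 (p : HR n) :
    ∑ j, (derivAlong (fieldX j) (derivAlong (fieldX j) gauge4) p
        + derivAlong (fieldY j) (derivAlong (fieldY j) gauge4) p)
      = 8 * (n + 2) * qz p := calc
  _ = ∑ j, (8 * qz p + 16 * (p.1 j ^ 2 + p.2.1 j ^ 2)) := by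
    refine Finset.sum_congr rfl fun j _ => ?_
    rw [derivAlong_fieldX_derivAlong_fieldX_gauge4, derivAlong_fieldY_derivAlong_fieldY_gauge4]
    ring
  _ = 8 * (n + 2) * qz p := by
    rw [Finset.sum_add_distrib, Finset.sum_const, ← Finset.mul_sum, Finset.card_univ,
      Fintype.card_fin, nsmul_eq_mul, qz]
    ring

theorem L0_gauge4_rpow {p : HR n} (hp : gauge4 p ≠ 0) (s : ℝ) :
    L0 (fun q => gauge4 q ^ s) p = -2 * s * (2 * s + n) * gauge4 p ^ (s - 1) * qz p := by
  have hdiff : ∀ᶠ q in 𝓝 p, DifferentiableAt ℝ gauge4 q :=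
    Eventually.of_forall differentiable_gauge4
  have hXX (j : Fin n) := derivAlong_derivAlong_rpow_const (fieldX j) hdiff
    (by rw [derivAlong_fieldX_gauge4]; fun_prop) hp s
  have hYY (j : Fin n) := derivAlong_derivAlong_rpow_const (fieldY j) hdiff
    (by rw [derivAlong_fieldY_gauge4]; fun_prop) hp s
  have hpow : gauge4 p ^ (s - 1) = gauge4 p ^ (s - 2) * gauge4 p := by
    rw [← Real.rpow_add_one hp]
    ring_nf
  simp only [L0, X_eq_derivAlong, Y_eq_derivAlong, hXX, hYY]
  calc
    _ = -(1 / 4) * (s * (s - 1) * gauge4 p ^ (s - 2) *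
          ∑ j, (derivAlong (fieldX j) gauge4 p ^ 2 + derivAlong (fieldY j) gauge4 p ^ 2)
        + s * gauge4 p ^ (s - 1) * ∑ j, (derivAlong (fieldX j) (derivAlong (fieldX j) gauge4) p
          + derivAlong (fieldY j) (derivAlong (fieldY j) gauge4) p)) := by
      simp only [Finset.mul_sum, ← Finset.sum_add_distrib]
      exact Finset.sum_congr rfl fun j _ => by ring
    _ = _ := by
      rw [sum_derivAlong_gauge4_sq, sum_derivAlong_derivAlong_gauge4, hpow]
      ring

theorem L0_const_mul (c : ℝ) (f : HR n → ℝ) (p : HR n) :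
    L0 (fun q => c * f q) p = c * L0 f p := by
  simp only [L0, X_eq_derivAlong, Y_eq_derivAlong, derivAlong_const_mul, ← mul_add,
    ← Finset.mul_sum]
  ring

theorem gauge4_ne_zero {p : HR n} (hp : p ≠ 0) : gauge4 p ≠ 0 := by
  contrapose! hp
  obtain ⟨hq, ht⟩ := (add_eq_zero_iff_of_nonneg (sq_nonneg _) (sq_nonneg _)).1 hp
  have hxy (i : Fin n) : p.1 i = 0 ∧ p.2.1 i = 0 := by
    have hi := (Finset.sum_eq_zero_iff_of_nonneg fun i _ => by positivity).1
      (pow_eq_zero_iff two_ne_zero |>.1 hq) i (Finset.mem_univ i)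
    simpa using (add_eq_zero_iff_of_nonneg (sq_nonneg _) (sq_nonneg _)).1 hi
  ext i
  · exact (hxy i).1
  · exact (hxy i).2
  · exact pow_eq_zero_iff two_ne_zero |>.1 ht

end Heisenberg

/-- g_e is L₀-harmonic away from the identity: L₀ g_e = 0 on Hₙ \ {e}. -/
theorem fundamental_solution_harmonic (n : ℕ) (p : HR n)
    (hp : p ≠ ((0 : Fin n → ℝ), (0 : Fin n → ℝ), (0 : ℝ))) :
    L0 (ge (n := n)) p = 0 := by
  change L0 (fun q => a0 n * gauge4 q ^ (-(n : ℝ) / 2)) p = 0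
  rw [L0_const_mul, L0_gauge4_rpow (gauge4_ne_zero hp)]
  ring
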